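/- arXiv:1912.13085 — 3 statements merged into one kernel-verified Lean document; each statement's English description precedes it below -/
import Mathlib

section
/- Let m be a positive natural number, let M and K be m×m real antisymmetric matrices, let S : ℝ^m → ℝ be continuously differentiable, and let z : ℝ × ℝ → ℝ^m (arguments written (x,t)) be twice continuously differentiable and satisfy M ∂_t z + K ∂_x z = ∇S(z) at every point. Define E(x,t) = S(z(x,t)) − (1/2)(K ∂_x z(x,t))·z(x,t) and F(x,t) = (1/2)(K ∂_t z(x,t))·z(x,t). Then ∂_t E + ∂_x F = 0 at every point (x,t). -/
/-!
Pairing the PDE with `z_t`, antisymmetry of `M` kills `M z_t · z_t`, so `∇S(z) · z_t = K z_x · z_t`.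
In `∂_t E + ∂_x F` the second-order terms `-½ K z_xt · z` and `½ K z_tx · z` cancel by symmetry
of mixed partials, and antisymmetry of `K` turns the rest into `∇S(z) · z_t - K z_x · z_t = 0`.
-/

open Matrix

/-- Partial derivative in the first (spatial) variable of a function on `ℝ × ℝ`. -/
noncomputable def pdX {E : Type*} [NormedAddCommGroup E] [NormedSpace ℝ E]
    (z : ℝ × ℝ → E) (p : ℝ × ℝ) : E :=
  fderiv ℝ z p (1, 0)

/-- Partial derivative in the second (temporal) variable of a function on `ℝ × ℝ`. -/
noncomputable def pdT {E : Type*} [NormedAddCommGroup E] [NormedSpace ℝ E]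
    (z : ℝ × ℝ → E) (p : ℝ × ℝ) : E :=
  fderiv ℝ z p (0, 1)

/-- The gradient of `S : ℝ^m → ℝ`, as the vector of partial derivatives. -/
noncomputable def gradS {m : ℕ} (S : (Fin m → ℝ) → ℝ) (v : Fin m → ℝ) : Fin m → ℝ :=
  fun i => fderiv ℝ S v (Pi.single i 1)

namespace Matrix

variable {n R : Type*} [Fintype n] [CommRing R] {K : Matrix n n R}

lemma mulVec_dotProduct_eq_neg_of_transpose_eq_neg (hK : Kᵀ = -K) (a b : n → R) :
    K *ᵥ a ⬝ᵥ b = -(K *ᵥ b ⬝ᵥ a) := by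
  rw [dotProduct_comm, dotProduct_mulVec, ← mulVec_transpose, hK, neg_mulVec, neg_dotProduct]

lemma mulVec_dotProduct_self_of_transpose_eq_neg [NoZeroDivisors R] [CharZero R]
    (hK : Kᵀ = -K) (a : n → R) : K *ᵥ a ⬝ᵥ a = 0 :=
  CharZero.eq_neg_self_iff.1 (mulVec_dotProduct_eq_neg_of_transpose_eq_neg hK a a)

end Matrix

section Curves

variable {𝕜 : Type*} [NontriviallyNormedField 𝕜] {n : Type*} [Fintype n]
  {u w : 𝕜 → n → 𝕜} {u' w' : n → 𝕜} {t : 𝕜}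

theorem HasDerivAt.dotProduct (hu : HasDerivAt u u' t) (hw : HasDerivAt w w' t) :
    HasDerivAt (fun s => u s ⬝ᵥ w s) (u' ⬝ᵥ w t + u t ⬝ᵥ w') t := by
  unfold _root_.dotProduct
  rw [← Finset.sum_add_distrib]
  exact HasDerivAt.fun_sum fun i _ => (hasDerivAt_pi.1 hu i).mul (hasDerivAt_pi.1 hw i)

theorem HasDerivAt.mulVec {l : Type*} (K : Matrix l n 𝕜) (hu : HasDerivAt u u' t) :
    HasDerivAt (fun s => K *ᵥ u s) (K *ᵥ u') t :=
  hasDerivAt_pi.2 fun i => by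
    simpa [Matrix.mulVec] using (hasDerivAt_const t (K i)).dotProduct hu

end Curves

lemma fderiv_apply_eq_gradS_dotProduct {m : ℕ} (S : (Fin m → ℝ) → ℝ) (v w : Fin m → ℝ) :
    fderiv ℝ S v w = gradS S v ⬝ᵥ w := by
  conv_lhs => rw [pi_eq_sum_univ' w]
  simp [gradS, dotProduct, mul_comm]

section PartialDerivatives

variable {E : Type*} [NormedAddCommGroup E] [NormedSpace ℝ E] {f : ℝ × ℝ → E}

lemma hasDerivAt_pdT {x t : ℝ} (hf : DifferentiableAt ℝ f (x, t)) :
    HasDerivAt (fun s => f (x, s)) (pdT f (x, t)) t :=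
  hf.hasFDerivAt.comp_hasDerivAt t ((hasDerivAt_const t x).prodMk (hasDerivAt_id t))

lemma hasDerivAt_pdX {x t : ℝ} (hf : DifferentiableAt ℝ f (x, t)) :
    HasDerivAt (fun y => f (y, t)) (pdX f (x, t)) x :=
  hf.hasFDerivAt.comp_hasDerivAt x ((hasDerivAt_id x).prodMk (hasDerivAt_const x t))

lemma ContDiff.pdX {n : WithTop ℕ∞} (hf : ContDiff ℝ (n + 1) f) : ContDiff ℝ n (pdX f) :=
  (hf.fderiv_right le_rfl).clm_apply contDiff_const

lemma ContDiff.pdT {n : WithTop ℕ∞} (hf : ContDiff ℝ (n + 1) f) : ContDiff ℝ n (pdT f) :=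
  (hf.fderiv_right le_rfl).clm_apply contDiff_const

lemma fderiv_fderiv_apply {p v : ℝ × ℝ} (hf : DifferentiableAt ℝ (fderiv ℝ f) p) (w : ℝ × ℝ) :
    fderiv ℝ (fun q => fderiv ℝ f q v) p w = fderiv ℝ (fderiv ℝ f) p w v := by
  rw [fderiv_clm_apply hf (differentiableAt_const v)]
  simp

lemma pdT_pdX (hf : ContDiff ℝ 2 f) (p : ℝ × ℝ) : pdT (pdX f) p = pdX (pdT f) p := by
  change fderiv ℝ (fun q => fderiv ℝ f q (1, 0)) p (0, 1) =
    fderiv ℝ (fun q => fderiv ℝ f q (0, 1)) p (1, 0)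
  have hf' := (hf.fderiv_right one_add_one_eq_two.le).differentiable one_ne_zero p
  rw [fderiv_fderiv_apply hf', fderiv_fderiv_apply hf']
  exact (hf.contDiffAt.isSymmSndFDerivAt (by simp)).eq _ _

end PartialDerivatives

theorem stmt0_general {m : ℕ}
    (M K : Matrix (Fin m) (Fin m) ℝ)
    (hM : Mᵀ = -M) (hK : Kᵀ = -K)
    (S : (Fin m → ℝ) → ℝ) (hS : ContDiff ℝ 1 S)
    (z : ℝ × ℝ → Fin m → ℝ) (hz : ContDiff ℝ 2 z)
    (hpde : ∀ p : ℝ × ℝ, M.mulVec (pdT z p) + K.mulVec (pdX z p) = gradS S (z p))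
    (E F : ℝ × ℝ → ℝ)
    (hE : ∀ p : ℝ × ℝ, E p = S (z p) - (1/2) * (K.mulVec (pdX z p) ⬝ᵥ z p))
    (hF : ∀ p : ℝ × ℝ, F p = (1/2) * (K.mulVec (pdT z p) ⬝ᵥ z p)) :
    ∀ x t : ℝ, deriv (fun s => E (x, s)) t + deriv (fun y => F (y, t)) x = 0 := by
  intro x t
  set p : ℝ × ℝ := (x, t)
  have hzd : Differentiable ℝ z := hz.differentiable two_ne_zero
  have hzxd : Differentiable ℝ (pdX z) := (hz.pdX (n := 1)).differentiable one_ne_zero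
  have hztd : Differentiable ℝ (pdT z) := (hz.pdT (n := 1)).differentiable one_ne_zero
  have hEt : HasDerivAt (fun s => E (x, s)) (gradS S (z p) ⬝ᵥ pdT z p -
      1/2 * (K *ᵥ pdT (pdX z) p ⬝ᵥ z p + K *ᵥ pdX z p ⬝ᵥ pdT z p)) t := by
    have hSz := (hS.differentiable one_ne_zero (z p)).hasFDerivAt.comp_hasDerivAt t
      (hasDerivAt_pdT (hzd p))
    rw [fderiv_apply_eq_gradS_dotProduct] at hSz
    simp only [hE]
    exact hSz.sub ((((hasDerivAt_pdT (hzxd p)).mulVec K).dotProduct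
      (hasDerivAt_pdT (hzd p))).const_mul _)
  have hFx : HasDerivAt (fun y => F (y, t))
      (1/2 * (K *ᵥ pdX (pdT z) p ⬝ᵥ z p + K *ᵥ pdT z p ⬝ᵥ pdX z p)) x := by
    simp only [hF]
    exact (((hasDerivAt_pdX (hztd p)).mulVec K).dotProduct (hasDerivAt_pdX (hzd p))).const_mul _
  have hgrad : gradS S (z p) ⬝ᵥ pdT z p = K *ᵥ pdX z p ⬝ᵥ pdT z p := by
    rw [← hpde p, add_dotProduct, mulVec_dotProduct_self_of_transpose_eq_neg hM, zero_add]
  rw [hEt.deriv, hFx.deriv, hgrad, pdT_pdX hz,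
    mulVec_dotProduct_eq_neg_of_transpose_eq_neg hK (pdT z p)]
  ring

/-- Local energy conservation law `∂ₜE + ∂ₓF = 0` for the multi-symplectic
Hamiltonian PDE `M zₜ + K zₓ = ∇S(z)`. -/
theorem stmt0 {m : ℕ} (hm : 0 < m)
    (M K : Matrix (Fin m) (Fin m) ℝ)
    (hM : Mᵀ = -M) (hK : Kᵀ = -K)
    (S : (Fin m → ℝ) → ℝ) (hS : ContDiff ℝ 1 S)
    (z : ℝ × ℝ → Fin m → ℝ) (hz : ContDiff ℝ 2 z)
    (hpde : ∀ p : ℝ × ℝ, M.mulVec (pdT z p) + K.mulVec (pdX z p) = gradS S (z p))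
    (E F : ℝ × ℝ → ℝ)
    (hE : ∀ p : ℝ × ℝ, E p = S (z p) - (1/2) * (K.mulVec (pdX z p) ⬝ᵥ z p))
    (hF : ∀ p : ℝ × ℝ, F p = (1/2) * (K.mulVec (pdT z p) ⬝ᵥ z p)) :
    ∀ x t : ℝ, deriv (fun s => E (x, s)) t + deriv (fun y => F (y, t)) x = 0 :=
  stmt0_general M K hM hK S hS z hz hpde E F hE hF
end

section
/- Let m be a positive natural number, let K and B be m×m real antisymmetric matrices and A an m×m real symmetric matrix. Let z⁻, z⁺, ž⁻, ž⁺ : ℝ → ℝ^m be differentiable functions of t; write [z] = z⁺ − z⁻, {z} = (z⁺ + z⁻)/2 (and similarly for ž); define the numerical fluxes K̂z(t) = K{z}(t) + A[z](t) + B ([z])'(t) and K̂ž(t) = K{ž}(t) + A[ž](t) + B ([ž])'(t), and set 𝓕(t) = ((K z⁺)·ž⁺ + (K z⁻)·ž⁻)/2 − K̂z·{ž} + K̂ž·{z}. Then for every t ∈ ℝ: (i) (K z⁻)·ž⁻ − K̂z·ž⁻ + K̂ž·z⁻ = 𝓕 − (1/2) d/dt[(B[ž])·[z]]; and (ii) (K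 z⁺)·ž⁺ − K̂z·ž⁺ + K̂ž·z⁺ = 𝓕 + (1/2) d/dt[(B[ž])·[z]]. -/
open Matrix

/-- The numerical flux `K̂z = K{z} + A[z] + B d/dt [z]` built from the two traces
`z⁻ = zm`, `z⁺ = zp` (functions of time) at a cell interface. -/
noncomputable def hatFlux {m : ℕ} (K A B : Matrix (Fin m) (Fin m) ℝ)
    (zm zp : ℝ → Fin m → ℝ) (t : ℝ) : Fin m → ℝ :=
  K.mulVec ((1/2 : ℝ) • (zp t + zm t)) + A.mulVec (zp t - zm t)
    + B.mulVec (deriv (fun s => zp s - zm s) t)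

/-- `𝓕 = {(Kz)·ž} − K̂z·{ž} + K̂ž·{z}` at a cell interface. -/
noncomputable def calF {m : ℕ} (K A B : Matrix (Fin m) (Fin m) ℝ)
    (zm zp wm wp : ℝ → Fin m → ℝ) (t : ℝ) : ℝ :=
  ((K.mulVec (zp t) ⬝ᵥ wp t) + (K.mulVec (zm t) ⬝ᵥ wm t)) / 2
    - hatFlux K A B zm zp t ⬝ᵥ ((1/2 : ℝ) • (wp t + wm t))
    + hatFlux K A B wm wp t ⬝ᵥ ((1/2 : ℝ) • (zp t + zm t))

/-!
`𝓕` is the average of the one-sided terms `(K z)·ž − K̂z·ž + K̂ž·z` taken at `(z⁻, ž⁻)` and at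
`(z⁺, ž⁺)`, so both identities say that the jump of the one-sided term is `d/dt (B[ž])·[z]`.
In that jump the `K`-terms cancel by the discrete product rule
`[(K z)·ž] = (K{z})·[ž] + (K[z])·{ž}` and the antisymmetry of `K`, the `A`-terms cancel by the
symmetry of `A`, and by the antisymmetry of `B` the `B`-terms are
`(B[ž]')·[z] + (B[ž])·[z]'`.
-/

namespace Matrix

section Algebra

variable {n R : Type*} [Fintype n]

theorem mulVec_dotProduct_comm_of_transpose_eq [CommRing R] {M : Matrix n n R} (h : Mᵀ = M)
    (x y : n → R) : M *ᵥ x ⬝ᵥ y = M *ᵥ y ⬝ᵥ x := by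
  rw [dotProduct_comm, dotProduct_mulVec, ← mulVec_transpose, h]

theorem mulVec_dotProduct_eq_neg_of_transpose_eq_neg_s5 [CommRing R] {M : Matrix n n R}
    (h : Mᵀ = -M) (x y : n → R) : M *ᵥ x ⬝ᵥ y = -(M *ᵥ y ⬝ᵥ x) := by
  rw [dotProduct_comm, dotProduct_mulVec, ← mulVec_transpose, h, neg_mulVec, neg_dotProduct]

theorem mulVec_dotProduct_sub_mulVec_dotProduct [Field R] [CharZero R] (M : Matrix n n R)
    (xm xp ym yp : n → R) :
    M *ᵥ xp ⬝ᵥ yp - M *ᵥ xm ⬝ᵥ ym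
      = M *ᵥ ((1/2 : R) • (xp + xm)) ⬝ᵥ (yp - ym)
        + M *ᵥ (xp - xm) ⬝ᵥ ((1/2 : R) • (yp + ym)) := by
  simp only [mulVec_add, mulVec_sub, mulVec_smul, add_dotProduct, sub_dotProduct,
    smul_dotProduct, dotProduct_add, dotProduct_sub, dotProduct_smul, smul_eq_mul]
  ring

end Algebra

theorem hasDerivAt_mulVec_dotProduct {𝕜 : Type*} [NontriviallyNormedField 𝕜]
    {m n : Type*} [Fintype m] [Fintype n] (M : Matrix m n 𝕜)
    {u : 𝕜 → n → 𝕜} {v : 𝕜 → m → 𝕜} {u' : n → 𝕜} {v' : m → 𝕜} {t : 𝕜}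
    (hu : HasDerivAt u u' t) (hv : HasDerivAt v v' t) :
    HasDerivAt (fun s => M *ᵥ u s ⬝ᵥ v s) (M *ᵥ u' ⬝ᵥ v t + M *ᵥ u t ⬝ᵥ v') t := by
  simp only [mulVec, dotProduct]
  rw [← Finset.sum_add_distrib]
  exact HasDerivAt.fun_sum fun i _ =>
    (HasDerivAt.fun_sum fun j _ => (hasDerivAt_pi.1 hu j).const_mul (M i j)).mul
      (hasDerivAt_pi.1 hv i)

end Matrix

section SideTerm

variable {n R : Type*} [Fintype n]

/-- `P`, `Q` stand for the fluxes `K̂z`, `K̂ž`, and `x`, `y` for the traces of `z`, `ž` on one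
side of the interface. -/
def sideTerm [CommRing R] (K : Matrix n n R) (P Q x y : n → R) : R :=
  K *ᵥ x ⬝ᵥ y - P ⬝ᵥ y + Q ⬝ᵥ x

theorem sideTerm_sub_sideTerm [CommRing R] (K : Matrix n n R) (P Q xm xp ym yp : n → R) :
    sideTerm K P Q xp yp - sideTerm K P Q xm ym
      = (K *ᵥ xp ⬝ᵥ yp - K *ᵥ xm ⬝ᵥ ym) - P ⬝ᵥ (yp - ym) + Q ⬝ᵥ (xp - xm) := by
  simp only [sideTerm, dotProduct_sub]
  ring

theorem sideTerm_sub_sideTerm_of_flux [Field R] [CharZero R] {K A B : Matrix n n R}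
    (hK : Kᵀ = -K) (hA : Aᵀ = A) (hB : Bᵀ = -B) (zm zp wm wp dz dw : n → R) :
    let P := K *ᵥ ((1/2 : R) • (zp + zm)) + A *ᵥ (zp - zm) + B *ᵥ dz
    let Q := K *ᵥ ((1/2 : R) • (wp + wm)) + A *ᵥ (wp - wm) + B *ᵥ dw
    sideTerm K P Q zp wp - sideTerm K P Q zm wm
      = B *ᵥ dw ⬝ᵥ (zp - zm) + B *ᵥ (wp - wm) ⬝ᵥ dz := by
  intro P Q
  have hKjump := mulVec_dotProduct_sub_mulVec_dotProduct K zm zp wm wp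
  have hKskew := mulVec_dotProduct_eq_neg_of_transpose_eq_neg_s5 hK (zp - zm) ((1/2 : R) • (wp + wm))
  have hAsymm := mulVec_dotProduct_comm_of_transpose_eq hA (zp - zm) (wp - wm)
  have hBskew := mulVec_dotProduct_eq_neg_of_transpose_eq_neg_s5 hB dz (wp - wm)
  rw [sideTerm_sub_sideTerm]
  simp only [P, Q, add_dotProduct]
  linear_combination hKjump + hKskew - hAsymm - hBskew

end SideTerm

theorem calF_eq_average {m : ℕ} (K A B : Matrix (Fin m) (Fin m) ℝ)
    (zm zp wm wp : ℝ → Fin m → ℝ) (t : ℝ) :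
    calF K A B zm zp wm wp t
      = (sideTerm K (hatFlux K A B zm zp t) (hatFlux K A B wm wp t) (zp t) (wp t)
          + sideTerm K (hatFlux K A B zm zp t) (hatFlux K A B wm wp t) (zm t) (wm t)) / 2 := by
  simp only [calF, sideTerm, dotProduct_smul, dotProduct_add, smul_eq_mul]
  ring

theorem stmt5_general {m : ℕ}
    (K A B : Matrix (Fin m) (Fin m) ℝ)
    (hK : Kᵀ = -K) (hB : Bᵀ = -B) (hA : Aᵀ = A)
    (zm zp wm wp : ℝ → Fin m → ℝ)
    (hzm : Differentiable ℝ zm) (hzp : Differentiable ℝ zp)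
    (hwm : Differentiable ℝ wm) (hwp : Differentiable ℝ wp) :
    ∀ t : ℝ,
      (K.mulVec (zm t) ⬝ᵥ wm t - hatFlux K A B zm zp t ⬝ᵥ wm t
          + hatFlux K A B wm wp t ⬝ᵥ zm t
        = calF K A B zm zp wm wp t
          - (1/2) * deriv (fun s => B.mulVec (wp s - wm s) ⬝ᵥ (zp s - zm s)) t)
      ∧
      (K.mulVec (zp t) ⬝ᵥ wp t - hatFlux K A B zm zp t ⬝ᵥ wp t
          + hatFlux K A B wm wp t ⬝ᵥ zp t
        = calF K A B zm zp wm wp t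
          + (1/2) * deriv (fun s => B.mulVec (wp s - wm s) ⬝ᵥ (zp s - zm s)) t) := by
  intro t
  have hderiv : deriv (fun s => B *ᵥ (wp s - wm s) ⬝ᵥ (zp s - zm s)) t
      = B *ᵥ deriv (fun s => wp s - wm s) t ⬝ᵥ (zp t - zm t)
        + B *ᵥ (wp t - wm t) ⬝ᵥ deriv (fun s => zp s - zm s) t :=
    (hasDerivAt_mulVec_dotProduct B ((hwp.sub hwm) t).hasDerivAt
      ((hzp.sub hzm) t).hasDerivAt).deriv
  have hjump :
      sideTerm K (hatFlux K A B zm zp t) (hatFlux K A B wm wp t) (zp t) (wp t)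
        - sideTerm K (hatFlux K A B zm zp t) (hatFlux K A B wm wp t) (zm t) (wm t)
      = deriv (fun s => B *ᵥ (wp s - wm s) ⬝ᵥ (zp s - zm s)) t := by
    rw [hderiv]
    exact sideTerm_sub_sideTerm_of_flux hK hA hB (zm t) (zp t) (wm t) (wp t) _ _
  have haverage := calF_eq_average K A B zm zp wm wp t
  unfold sideTerm at hjump haverage
  constructor <;> linarith

/-- Lemma 3.1 of the paper: the two interface identities for the numerical flux
`K̂z = K{z} + A[z] + B d/dt[z]`, with `K`, `B` antisymmetric and `A` symmetric. -/
theorem stmt5 {m : ℕ} (hm : 0 < m)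
    (K A B : Matrix (Fin m) (Fin m) ℝ)
    (hK : Kᵀ = -K) (hB : Bᵀ = -B) (hA : Aᵀ = A)
    (zm zp wm wp : ℝ → Fin m → ℝ)
    (hzm : Differentiable ℝ zm) (hzp : Differentiable ℝ zp)
    (hwm : Differentiable ℝ wm) (hwp : Differentiable ℝ wp) :
    ∀ t : ℝ,
      (K.mulVec (zm t) ⬝ᵥ wm t - hatFlux K A B zm zp t ⬝ᵥ wm t
          + hatFlux K A B wm wp t ⬝ᵥ zm t
        = calF K A B zm zp wm wp t
          - (1/2) * deriv (fun s => B.mulVec (wp s - wm s) ⬝ᵥ (zp s - zm s)) t)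
      ∧
      (K.mulVec (zp t) ⬝ᵥ wp t - hatFlux K A B zm zp t ⬝ᵥ wp t
          + hatFlux K A B wm wp t ⬝ᵥ zp t
        = calF K A B zm zp wm wp t
          + (1/2) * deriv (fun s => B.mulVec (wp s - wm s) ⬝ᵥ (zp s - zm s)) t) :=
  stmt5_general K A B hK hB hA zm zp wm wp hzm hzp hwm hwp
end

section
/- Let m be a positive natural number and K an m×m real antisymmetric matrix. Then there exist an m×m real orthogonal matrix Q and a ⌊m/2⌋×⌊m/2⌋ real matrix Λ such that K = Qᵀ J Q, where J is the block matrix [[0, −Λᵀ],[Λ, 0]] (with blocks of size m/2) if m is even, and J is the block matrix [[0, 0, −Λᵀ],[0, 0, 0],[Λ, 0, 0]] (with outer blocks of size ⌊m/2⌋ and middle block of size 1) if m is odd. -/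
/-!
The matrix `K` acts on Euclidean space as a skew-symmetric operator `T`, so `T ∘ T` is symmetric.
For a unit eigenvector `w` of `T ∘ T` with `T w ≠ 0`, the vectors `w` and `v = T w / ‖T w‖` are
orthonormal and `T` maps each of them to a multiple of the other; if `T` kills a whole eigenbasis
of `T ∘ T`, then `T = 0` and any orthonormal pair does the same. The orthogonal complement of
`span {w, v}` is again `T`-invariant, so by induction on the dimension there is an orthonormal
basis `b₀, …, b_{m-1}` with `⟪T bᵢ, bⱼ⟫ = 0` unless `i + j = m - 1` (put `w` first and `v` last).
In this basis the matrix of `K` is antisymmetric and supported on the antidiagonal, which is the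
block shape of `Jmat m Λ`: for odd `m` the middle antidiagonal entry is a diagonal one, hence zero.
-/

open Matrix

/-- The block matrix `J = [[0, −Λᵀ],[Λ, 0]]` (for `m` even) or
`[[0, 0, −Λᵀ],[0, 0, 0],[Λ, 0, 0]]` with middle block of size 1 (for `m` odd),
where the outer blocks have size `⌊m/2⌋`. -/
def Jmat (m : ℕ) (Λ : Matrix (Fin (m/2)) (Fin (m/2)) ℝ) : Matrix (Fin m) (Fin m) ℝ :=
  fun i j =>
    if h : (i : ℕ) < m/2 ∧ m - m/2 ≤ (j : ℕ) then
      -Λ ⟨(j : ℕ) - (m - m/2), by have := j.isLt; omega⟩ ⟨(i : ℕ), h.1⟩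
    else if h' : m - m/2 ≤ (i : ℕ) ∧ (j : ℕ) < m/2 then
      Λ ⟨(i : ℕ) - (m - m/2), by have := i.isLt; omega⟩ ⟨(j : ℕ), h'.2⟩
    else 0

open Module Submodule
open scoped RealInnerProductSpace InnerProductSpace

section Orthonormal

variable {𝕜 E : Type*} [RCLike 𝕜] [NormedAddCommGroup E] [InnerProductSpace 𝕜 E] {n : ℕ}

theorem Orthonormal.fin_cons {g : Fin n → E} (hg : Orthonormal 𝕜 g) {w : E} (hw : ‖w‖ = 1)
    (hwg : ∀ i, ⟪w, g i⟫_𝕜 = 0) : Orthonormal 𝕜 (Fin.cons w g : Fin (n + 1) → E) := by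
  refine ⟨Fin.cases hw hg.1, fun i j hij => ?_⟩
  cases i using Fin.cases <;> cases j using Fin.cases
  · exact absurd rfl hij
  · simpa using hwg _
  · simpa [inner_eq_zero_symm] using hwg _
  · simpa using hg.2 (by simpa using hij)

theorem Orthonormal.fin_snoc {g : Fin n → E} (hg : Orthonormal 𝕜 g) {v : E} (hv : ‖v‖ = 1)
    (hvg : ∀ i, ⟪v, g i⟫_𝕜 = 0) : Orthonormal 𝕜 (Fin.snoc g v : Fin (n + 1) → E) := by
  refine ⟨Fin.lastCases (by simpa using hv) (by simpa using hg.1), fun i j hij => ?_⟩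
  cases i using Fin.lastCases <;> cases j using Fin.lastCases
  · exact absurd rfl hij
  · simpa using hvg _
  · simpa [inner_eq_zero_symm] using hvg _
  · simpa using hg.2 (by simpa using hij)

end Orthonormal

namespace LinearMap

section Antidiagonal

variable {𝕜 E : Type*} [RCLike 𝕜] [NormedAddCommGroup E] [InnerProductSpace 𝕜 E] {n : ℕ}

def IsAntidiagonalIn (T : E →ₗ[𝕜] E) (b : Fin n → E) : Prop :=
  ∀ i j, j ≠ i.rev → ⟪T (b i), b j⟫_𝕜 = 0

theorem IsAntidiagonalIn.cons_snoc {T : E →ₗ[𝕜] E} {g : Fin n → E} (hg : T.IsAntidiagonalIn g)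
    {w v : E} {c d : 𝕜} (hf : Orthonormal 𝕜 (Fin.cons w (Fin.snoc g v) : Fin (n + 2) → E))
    (hc : T w = c • v) (hd : T v = d • w) (hgw : ∀ i, ⟪T (g i), w⟫_𝕜 = 0)
    (hgv : ∀ i, ⟪T (g i), v⟫_𝕜 = 0) :
    T.IsAntidiagonalIn (Fin.cons w (Fin.snoc g v) : Fin (n + 2) → E) := by
  set f : Fin (n + 2) → E := Fin.cons w (Fin.snoc g v)
  have hff := orthonormal_iff_ite.mp hf
  intro i j hij
  cases i using Fin.cases with
  | zero =>
    rw [show T (f 0) = c • f (Fin.last _) by simp [f, hc], inner_smul_left, hff,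
      if_neg (by simpa [eq_comm] using hij), mul_zero]
  | succ i =>
    cases i using Fin.lastCases with
    | last =>
      rw [show T (f (Fin.last n).succ) = d • f 0 by simp [f, hd], inner_smul_left, hff,
        if_neg (by simpa [eq_comm] using hij), mul_zero]
    | cast i =>
      cases j using Fin.cases with
      | zero => simpa [f] using hgw i
      | succ j =>
        cases j using Fin.lastCases with
        | last => simpa [f] using hgv i
        | cast j => simpa [f] using hg i j (by simpa [Fin.rev_succ, Fin.rev_castSucc] using hij)

end Antidiagonal

variable {E : Type*} [NormedAddCommGroup E] [InnerProductSpace ℝ E] {T : E →ₗ[ℝ] E}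

def IsSkewSymmetric (T : E →ₗ[ℝ] E) : Prop :=
  ∀ x y, ⟪T x, y⟫ = -⟪x, T y⟫

namespace IsSkewSymmetric

theorem inner_apply_self (hT : T.IsSkewSymmetric) (x : E) : ⟪T x, x⟫ = 0 := by
  have := hT x x
  rw [real_inner_comm (T x) x] at this
  linarith

theorem isSymmetric_comp_self (hT : T.IsSkewSymmetric) : (T ∘ₗ T).IsSymmetric := fun x y => by
  rw [comp_apply, comp_apply, hT, hT x, neg_neg]

theorem restrict (hT : T.IsSkewSymmetric) {V : Submodule ℝ E} (hV : ∀ x ∈ V, T x ∈ V) :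
    (T.restrict hV).IsSkewSymmetric :=
  fun x y => hT x y

theorem invariant_orthogonal (hT : T.IsSkewSymmetric) {V : Submodule ℝ E}
    (hV : ∀ x ∈ V, T x ∈ V) : ∀ x ∈ Vᗮ, T x ∈ Vᗮ := fun x hx u hu => by
  rw [real_inner_comm, hT, inner_left_of_mem_orthogonal (hV u hu) hx, neg_zero]

theorem exists_orthonormal_pair_of_eigenvector (hT : T.IsSkewSymmetric) {w : E} {μ : ℝ}
    (hw : ‖w‖ = 1) (hμ : T (T w) = μ • w) (hTw : T w ≠ 0) :
    ∃ v, Orthonormal ℝ ![w, v] ∧ (∃ c : ℝ, T w = c • v) ∧ ∃ d : ℝ, T v = d • w := by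
  have hc : ‖T w‖ ≠ 0 := norm_ne_zero_iff.mpr hTw
  refine ⟨‖T w‖⁻¹ • T w, ?_, ⟨‖T w‖, ?_⟩, ⟨‖T w‖⁻¹ * μ, ?_⟩⟩
  · have hwTw : ⟪w, T w⟫ = 0 := by rw [real_inner_comm]; exact hT.inner_apply_self w
    rw [orthonormal_iff_ite]
    have hv : ‖‖T w‖⁻¹ • T w‖ = 1 := by
      rw [norm_smul, norm_inv, norm_norm, inv_mul_cancel₀ hc]
    intro i j
    fin_cases i <;> fin_cases j <;>
      simp [hw, hv, real_inner_smul_right, real_inner_comm w, hwTw]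
  · rw [smul_smul, mul_inv_cancel₀ hc, one_smul]
  · rw [map_smul, hμ, smul_smul]

theorem exists_orthonormal_pair [FiniteDimensional ℝ E] (hT : T.IsSkewSymmetric)
    (h2 : 2 ≤ finrank ℝ E) :
    ∃ w v : E, Orthonormal ℝ ![w, v] ∧ (∃ c : ℝ, T w = c • v) ∧ ∃ d : ℝ, T v = d • w := by
  obtain ⟨n, hn⟩ : ∃ n, finrank ℝ E = n + 2 := ⟨_, (Nat.sub_add_cancel h2).symm⟩
  let e := hT.isSymmetric_comp_self.eigenvectorBasis hn
  by_cases hker : ∀ i, T (e i) = 0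
  · refine ⟨e 0, e 1, ?_, ⟨0, by simp [hker]⟩, ⟨0, by simp [hker]⟩⟩
    have hinj : Function.Injective ![(0 : Fin (n + 2)), 1] := by
      intro a b h; fin_cases a <;> fin_cases b <;> simp_all
    convert e.orthonormal.comp _ hinj
    ext i; fin_cases i <;> rfl
  · obtain ⟨i, hi⟩ := not_forall.mp hker
    exact ⟨e i, hT.exists_orthonormal_pair_of_eigenvector (e.orthonormal.1 i)
      (hT.isSymmetric_comp_self.apply_eigenvectorBasis hn i) hi⟩

theorem exists_orthonormalBasis_antidiagonal [FiniteDimensional ℝ E] (hT : T.IsSkewSymmetric)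
    {n : ℕ} (hn : finrank ℝ E = n) :
    ∃ b : OrthonormalBasis (Fin n) ℝ E, T.IsAntidiagonalIn b := by
  induction n using Nat.twoStepInduction generalizing E with
  | zero => exact ⟨(stdOrthonormalBasis ℝ E).reindex (finCongr hn), fun i => i.elim0⟩
  | one =>
    exact ⟨(stdOrthonormalBasis ℝ E).reindex (finCongr hn),
      fun i j hij => (hij (Subsingleton.elim _ _)).elim⟩
  | more k ih _ =>
    obtain ⟨w, v, hwv, ⟨c, hc⟩, ⟨d, hd⟩⟩ := hT.exists_orthonormal_pair (by omega)
    set P := span ℝ (Set.range ![w, v])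
    have hwP : w ∈ P := subset_span ⟨0, rfl⟩
    have hvP : v ∈ P := subset_span ⟨1, rfl⟩
    have hP : P ≤ P.comap T := by
      rw [span_le]
      rintro _ ⟨i, rfl⟩
      fin_cases i
      · simpa [hc] using P.smul_mem c hvP
      · simpa [hd] using P.smul_mem d hwP
    have hTW := hT.invariant_orthogonal hP
    have hW : finrank ℝ Pᗮ = k := by
      have := P.finrank_add_finrank_orthogonal
      rw [finrank_span_eq_card hwv.linearIndependent, Fintype.card_fin, hn] at this
      omega
    obtain ⟨b', hb'⟩ := ih (hT.restrict hTW) hW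
    have hf : Orthonormal ℝ
        (Fin.cons w (Fin.snoc (fun i => (b' i : E)) v) : Fin (k + 2) → E) := by
      refine ((b'.orthonormal.comp_linearIsometry Pᗮ.subtypeₗᵢ).fin_snoc (hwv.1 1)
        fun i => inner_right_of_mem_orthogonal hvP (b' i).2).fin_cons (hwv.1 0) fun i => ?_
      cases i using Fin.lastCases
      · simpa using hwv.2 (show (0 : Fin 2) ≠ 1 by decide)
      · simpa using inner_right_of_mem_orthogonal hwP (b' _).2
    refine ⟨OrthonormalBasis.mk hf (hf.linearIndependent.span_eq_top_of_card_eq_finrank'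
      (by simp [hn])).ge, ?_⟩
    rw [OrthonormalBasis.coe_mk]
    exact IsAntidiagonalIn.cons_snoc (T := T) (g := fun i => (b' i : E)) hb' hf hc hd
      (fun i => inner_left_of_mem_orthogonal hwP (hTW _ (b' i).2))
      (fun i => inner_left_of_mem_orthogonal hvP (hTW _ (b' i).2))

end IsSkewSymmetric
end LinearMap

section EuclideanSpace

variable {n ι : Type*} [Fintype n] [DecidableEq n] [Fintype ι]

theorem Matrix.isSkewSymmetric_toEuclideanLin {K : Matrix n n ℝ} (hK : Kᵀ = -K) :
    (toEuclideanLin K).IsSkewSymmetric := fun x y => by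
  rw [← LinearMap.adjoint_inner_right, ← toEuclideanLin_conjTranspose_eq_adjoint,
    conjTranspose_eq_transpose_of_trivial, hK, map_neg, LinearMap.neg_apply, inner_neg_right]

theorem OrthonormalBasis.basisFun_toMatrix_transpose_mul_mul_apply
    (b : OrthonormalBasis ι ℝ (EuclideanSpace ℝ n)) (K : Matrix n n ℝ) (i j : ι) :
    (((EuclideanSpace.basisFun n ℝ).toBasis.toMatrix b)ᵀ * K *
      (EuclideanSpace.basisFun n ℝ).toBasis.toMatrix b) i j = ⟪b i, toEuclideanLin K (b j)⟫ := by
  simp only [Matrix.mul_apply, transpose_apply, Basis.toMatrix_apply,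
    OrthonormalBasis.coe_toBasis_repr_apply, EuclideanSpace.basisFun_repr, Finset.sum_mul,
    PiLp.inner_apply, ofLp_toLpLin, toLin'_apply, mulVec, dotProduct, RCLike.inner_apply,
    Real.ringHom_apply]
  rw [Finset.sum_comm]
  exact Finset.sum_congr rfl fun k _ => Finset.sum_congr rfl fun l _ => by ring

end EuclideanSpace

theorem exists_eq_Jmat {m : ℕ} {M : Matrix (Fin m) (Fin m) ℝ} (hM : Mᵀ = -M)
    (hanti : ∀ i j, j ≠ i.rev → M i j = 0) : ∃ Λ, M = Jmat m Λ := by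
  have hskew : ∀ i j, M j i = -M i j := fun i j => by simpa using congrFun₂ hM i j
  refine ⟨fun p q => M ⟨m - m / 2 + p, by omega⟩ ⟨q, by omega⟩, ?_⟩
  ext i j
  simp only [Jmat]
  split_ifs with h h'
  · rw [← hskew]
    congr 1
    ext; simp only; omega
  · congr 1
    ext; simp only; omega
  · by_cases hij : j = i.rev
    · have hj : (j : ℕ) = m - (i + 1) := by rw [hij, Fin.val_rev]
      have hji : j = i := Fin.ext (by omega)
      subst hji
      linarith [hskew j j]
    · exact hanti i j hij

theorem stmt10_general {m : ℕ}
    (K : Matrix (Fin m) (Fin m) ℝ) (hK : Kᵀ = -K) :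
    ∃ (Q : Matrix (Fin m) (Fin m) ℝ) (Λ : Matrix (Fin (m/2)) (Fin (m/2)) ℝ),
      Qᵀ * Q = 1 ∧ K = Qᵀ * Jmat m Λ * Q := by
  obtain ⟨b, hb⟩ := (isSkewSymmetric_toEuclideanLin hK).exists_orthonormalBasis_antidiagonal
    finrank_euclideanSpace_fin
  set P := (EuclideanSpace.basisFun (Fin m) ℝ).toBasis.toMatrix b
  have hPPt : P * Pᵀ = 1 := by
    simpa using
      (EuclideanSpace.basisFun (Fin m) ℝ).toMatrix_orthonormalBasis_self_mul_conjTranspose b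
  obtain ⟨Λ, hΛ⟩ := exists_eq_Jmat (M := Pᵀ * K * P)
    (by simp only [transpose_mul, transpose_transpose, hK, Matrix.mul_neg, Matrix.neg_mul,
      Matrix.mul_assoc])
    fun i j hij => by
      rw [b.basisFun_toMatrix_transpose_mul_mul_apply, real_inner_comm]
      exact hb j i (by rwa [ne_eq, eq_comm, Fin.rev_eq_iff])
  refine ⟨Pᵀ, Λ, by rwa [transpose_transpose], ?_⟩
  calc K = P * Pᵀ * K * (P * Pᵀ) := by rw [hPPt, Matrix.one_mul, Matrix.mul_one]
    _ = (Pᵀ)ᵀ * Jmat m Λ * Pᵀ := by rw [transpose_transpose, ← hΛ]; simp only [Matrix.mul_assoc]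

/-- Every real antisymmetric matrix `K` can be written as `K = Qᵀ J Q` with `Q`
orthogonal and `J` of the block form above for some `⌊m/2⌋ × ⌊m/2⌋` real matrix `Λ`. -/
theorem stmt10 {m : ℕ} (hm : 0 < m)
    (K : Matrix (Fin m) (Fin m) ℝ) (hK : Kᵀ = -K) :
    ∃ (Q : Matrix (Fin m) (Fin m) ℝ) (Λ : Matrix (Fin (m/2)) (Fin (m/2)) ℝ),
      Qᵀ * Q = 1 ∧ K = Qᵀ * Jmat m Λ * Q :=
  stmt10_general K hK
end
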